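/- Let r, x, g_sh, b_sh, σ be real numbers with r² + x² ≠ 0 and τ > 0, and let V_k, V_m be complex numbers. Define z = r + i·x, y = 1/z, y_sh = g_sh + i·b_sh, I_km = (1/τ)·y·((1/τ)·V_k − exp(i·σ)·V_m) + (1/(2τ²))·y_sh·V_k, S_km = V_k·conj(I_km), P_km = Re(S_km), Q_km = Im(S_km). Then (P_km − (r/(r² + x²) + g_sh/2)·|V_k|²/τ²)² + (Q_km − (x/(r² + x²) − b_sh/2)·|V_k|²/τ²)² ≤ |V_k|²·|V_m|²/(τ²·(r² + x²)) (the general circle inequality at k). -/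

import Mathlib

/-!
Expanding the conjugate current splits the power as
`S_km = (|V_k|²/τ²) · conj (y + y_sh/2) - V_k · conj (y · e^{iσ} · V_m) / τ`:
the first term is the centre of the circle and the second has modulus `|V_k| |V_m| |y| / τ`,
with `|y|² = 1/(r² + x²)`. So `S_km` lies exactly on the circle: the inequality is an
equality.
-/

open Complex ComplexConjugate

lemma re_one_div_ofReal_add_ofReal_mul_I (r x : ℝ) :
    (1 / ((r : ℂ) + x * I)).re = r / (r ^ 2 + x ^ 2) := by
  rw [one_div, inv_re, normSq_add_mul_I]; simp

lemma im_one_div_ofReal_add_ofReal_mul_I (r x : ℝ) :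
    (1 / ((r : ℂ) + x * I)).im = -(x / (r ^ 2 + x ^ 2)) := by
  rw [one_div, inv_im, normSq_add_mul_I]; simp [neg_div]

lemma sq_norm_one_div_ofReal_add_ofReal_mul_I (r x : ℝ) :
    ‖1 / ((r : ℂ) + x * I)‖ ^ 2 = 1 / (r ^ 2 + x ^ 2) := by
  rw [Complex.sq_norm, map_div₀, map_one, normSq_add_mul_I]

lemma mul_conj_tap_current (τ σ : ℝ) (y ysh Vk Vm : ℂ) :
    Vk * conj ((1 / (τ : ℂ)) * y * ((1 / (τ : ℂ)) * Vk - exp ((σ : ℂ) * I) * Vm)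
        + (1 / (2 * (τ : ℂ) ^ 2)) * ysh * Vk)
      = (‖Vk‖ ^ 2 / τ ^ 2 : ℝ) * conj (y + ysh / 2)
        - Vk * conj (y * exp ((σ : ℂ) * I) * Vm) / τ := by
  simp only [map_add, map_mul, map_sub, map_div₀, map_one, map_pow, map_ofNat, conj_ofReal,
    ofReal_div, ofReal_pow, Complex.sq_norm, ← mul_conj]
  ring

lemma sq_re_sub_add_sq_im_sub (S c : ℂ) :
    (S.re - c.re) ^ 2 + (S.im - c.im) ^ 2 = ‖S - c‖ ^ 2 := by
  rw [Complex.sq_norm, normSq_apply, sub_re, sub_im]; ring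

theorem general_circle_inequality_k_general (r x gsh bsh σ τ : ℝ)
    (Vk Vm : ℂ)
    (z y ysh Ikm Skm : ℂ) (Pkm Qkm : ℝ)
    (hz : z = (r : ℂ) + (x : ℂ) * Complex.I)
    (hy : y = 1 / z)
    (hysh : ysh = (gsh : ℂ) + (bsh : ℂ) * Complex.I)
    (hI : Ikm = (1 / (τ : ℂ)) * y * ((1 / (τ : ℂ)) * Vk - Complex.exp ((σ : ℂ) * Complex.I) * Vm)
        + (1 / (2 * (τ : ℂ) ^ 2)) * ysh * Vk)
    (hS : Skm = Vk * (starRingEnd ℂ) Ikm)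
    (hP : Pkm = Skm.re)
    (hQ : Qkm = Skm.im) :
    (Pkm - (r / (r ^ 2 + x ^ 2) + gsh / 2) * ‖Vk‖ ^ 2 / τ ^ 2) ^ 2
      + (Qkm - (x / (r ^ 2 + x ^ 2) - bsh / 2) * ‖Vk‖ ^ 2 / τ ^ 2) ^ 2
      ≤ ‖Vk‖ ^ 2 * ‖Vm‖ ^ 2 / (τ ^ 2 * (r ^ 2 + x ^ 2)) := by
  have hpower := mul_conj_tap_current τ σ y ysh Vk Vm
  rw [← hI] at hpower
  have hre : ((‖Vk‖ ^ 2 / τ ^ 2 : ℝ) * conj (y + ysh / 2)).re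
      = (r / (r ^ 2 + x ^ 2) + gsh / 2) * ‖Vk‖ ^ 2 / τ ^ 2 := by
    rw [re_ofReal_mul, conj_re, add_re, div_ofNat_re, hy, hz, hysh,
      re_one_div_ofReal_add_ofReal_mul_I]
    simp only [add_re, ofReal_re, re_ofReal_mul, I_re]; ring
  have him : ((‖Vk‖ ^ 2 / τ ^ 2 : ℝ) * conj (y + ysh / 2)).im
      = (x / (r ^ 2 + x ^ 2) - bsh / 2) * ‖Vk‖ ^ 2 / τ ^ 2 := by
    rw [im_ofReal_mul, conj_im, add_im, div_ofNat_im, hy, hz, hysh,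
      im_one_div_ofReal_add_ofReal_mul_I]
    simp only [add_im, ofReal_im, im_ofReal_mul, I_im]; ring
  have hradius : ‖Vk * conj (y * exp ((σ : ℂ) * I) * Vm) / τ‖ ^ 2
      = ‖Vk‖ ^ 2 * ‖Vm‖ ^ 2 / (τ ^ 2 * (r ^ 2 + x ^ 2)) := by
    rw [norm_div, norm_mul, RCLike.norm_conj, norm_mul, norm_mul, norm_exp_ofReal_mul_I, mul_one,
      Complex.norm_real, Real.norm_eq_abs, div_pow, mul_pow, mul_pow, sq_abs, hy, hz,
      sq_norm_one_div_ofReal_add_ofReal_mul_I, mul_comm (τ ^ 2), ← div_div]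
    ring
  rw [hP, hQ, hS, ← hre, ← him, sq_re_sub_add_sq_im_sub, hpower, sub_sub_cancel_left, norm_neg,
    hradius]

theorem general_circle_inequality_k (r x gsh bsh σ τ : ℝ) (hrx : r ^ 2 + x ^ 2 ≠ 0)
    (hτ : 0 < τ) (Vk Vm : ℂ)
    (z y ysh Ikm Skm : ℂ) (Pkm Qkm : ℝ)
    (hz : z = (r : ℂ) + (x : ℂ) * Complex.I)
    (hy : y = 1 / z)
    (hysh : ysh = (gsh : ℂ) + (bsh : ℂ) * Complex.I)
    (hI : Ikm = (1 / (τ : ℂ)) * y * ((1 / (τ : ℂ)) * Vk - Complex.exp ((σ : ℂ) * Complex.I) * Vm)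
        + (1 / (2 * (τ : ℂ) ^ 2)) * ysh * Vk)
    (hS : Skm = Vk * (starRingEnd ℂ) Ikm)
    (hP : Pkm = Skm.re)
    (hQ : Qkm = Skm.im) :
    (Pkm - (r / (r ^ 2 + x ^ 2) + gsh / 2) * ‖Vk‖ ^ 2 / τ ^ 2) ^ 2
      + (Qkm - (x / (r ^ 2 + x ^ 2) - bsh / 2) * ‖Vk‖ ^ 2 / τ ^ 2) ^ 2
      ≤ ‖Vk‖ ^ 2 * ‖Vm‖ ^ 2 / (τ ^ 2 * (r ^ 2 + x ^ 2)) :=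
  general_circle_inequality_k_general r x gsh bsh σ τ Vk Vm z y ysh Ikm Skm Pkm Qkm hz hy hysh hI hS
    hP hQ
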